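/- arXiv:2605.18335 — 4 statements merged into one kernel-verified Lean document; each statement's English description precedes it below -/
import Mathlib

section
/- Let U = {u_1, ..., u_{2^m}} be a set of 2^m distinct nonzero vectors in F_2^n, let B : F_2^n → F_2^m be a uniformly random linear map, fix y ∈ F_2^m, and define Z_y = |{i : B u_i = y}|. Then for every integer r ≥ 0, with a = ⌈log_2(r+2)⌉, we have Pr[Z_y > r] ≤ (∏_{j=0}^{a-1} (r + 2 - 2^j))^{-1}. -/
/-!
Let `X_B` count the ordered linearly independent `a`-tuples of vectors `u_i` with `B u_i = y`.
If more than `r` of the `u_i` are sent to `y`, choosing such a tuple greedily gives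
`X_B ≥ ∏_{j<a} (r + 2 - 2^j)`: the span of `j` chosen vectors contains at most `2^j - 1` nonzero
vectors, so at least `r + 2 - 2^j` candidates remain. On the other hand a linearly independent
tuple is sent to `(y, …, y)` by exactly a `2^{-ma}` fraction of all `B`, and there are at most
`(2^m)^a` tuples, so `E[X_B] ≤ 1`. Markov's inequality concludes; the choice
`a = ⌈log_2 (r + 2)⌉` keeps every factor of the product positive.
-/

/-- The space of F_2-linear maps from F_2^n to F_2^m. -/
abbrev Lin (n m : ℕ) := (Fin n → ZMod 2) →ₗ[ZMod 2] (Fin m → ZMod 2)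

open Finset

theorem AddMonoidHom.card_fiber_mul_card_of_surjective {G H : Type*} [AddGroup G] [AddGroup H]
    {f : G →+ H} (hf : Function.Surjective f) (h : H) :
    Nat.card (f ⁻¹' {h}) * Nat.card H = Nat.card G := by
  rw [Nat.card_congr (f.fiberEquivKerOfSurjective hf h),
    AddSubgroup.card_eq_card_quotient_mul_card_addSubgroup f.ker,
    Nat.card_congr (QuotientAddGroup.quotientKerEquivOfSurjective f hf).toEquiv, mul_comm]

theorem prod_range_clog_sub_pow_pos (b x : ℕ) : 0 < ∏ j ∈ range (Nat.clog b x), (x - b ^ j) :=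
  prod_pos fun _ hj => Nat.sub_pos_of_lt (Nat.pow_lt_of_lt_clog (mem_range.mp hj))

section

variable {K V W ι : Type*} [Field K] [AddCommGroup V] [Module K V] [AddCommGroup W] [Module K W]

theorem LinearIndependent.exists_linearMap_apply_eq [Fintype ι] {v : ι → V}
    (hv : LinearIndependent K v) (w : ι → W) : ∃ B : V →ₗ[K] W, ∀ i, B (v i) = w i := by
  classical
  set f := Fintype.linearCombination K v
  have hf : LinearMap.ker f = ⊥ := LinearMap.ker_eq_bot.mpr hv.fintypeLinearCombination_injective
  refine ⟨Fintype.linearCombination K w ∘ₗ f.leftInverse, fun i => ?_⟩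
  have hvi : v i = f (Pi.single i 1) := by
    rw [Fintype.linearCombination_apply_single, one_smul]
  rw [LinearMap.comp_apply, hvi, LinearMap.leftInverse_apply_of_inj hf,
    Fintype.linearCombination_apply_single, one_smul]

theorem LinearIndependent.card_linearMap_apply_eq_mul [Fintype ι] {v : ι → V}
    (hv : LinearIndependent K v) (w : ι → W) :
    Nat.card {B : V →ₗ[K] W // ∀ i, B (v i) = w i} * Nat.card W ^ Fintype.card ι =
      Nat.card (V →ₗ[K] W) := by
  let eval : (V →ₗ[K] W) →ₗ[K] (ι → W) := LinearMap.pi fun i => LinearMap.applyₗ (v i)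
  have hsurj : Function.Surjective eval := fun w =>
    (hv.exists_linearMap_apply_eq w).imp fun _ hB => funext hB
  have hfiber : Nat.card {B : V →ₗ[K] W // ∀ i, B (v i) = w i} =
      Nat.card (eval.toAddMonoidHom ⁻¹' {w}) :=
    Nat.card_congr (Equiv.subtypeEquivRight fun _ => funext_iff.symm)
  rw [hfiber, ← Nat.card_eq_fintype_card, ← Nat.card_fun,
    AddMonoidHom.card_fiber_mul_card_of_surjective hsurj]

open Classical

variable (K) in
noncomputable def indepTuples (S : Finset V) (b : ℕ) : Finset (Fin b → V) :=
  {v ∈ Fintype.piFinset fun _ => S | LinearIndependent K v}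

theorem mem_indepTuples {S : Finset V} {b : ℕ} {v : Fin b → V} :
    v ∈ indepTuples K S b ↔ (∀ t, v t ∈ S) ∧ LinearIndependent K v := by
  simp [indepTuples]

theorem card_indepTuples_le (S : Finset V) (b : ℕ) : #(indepTuples K S b) ≤ #S ^ b :=
  (card_filter_le _ _).trans (Fintype.card_piFinset_const S b).le

theorem indepTuples_filter (S : Finset V) (p : V → Prop) [DecidablePred p] (b : ℕ) :
    indepTuples K {x ∈ S | p x} b = {v ∈ indepTuples K S b | ∀ t, p (v t)} := by
  ext v
  simp only [mem_indepTuples, mem_filter]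
  grind

theorem sum_card_notMem_span_le_card_indepTuples (S : Finset V) (b : ℕ) :
    ∑ v ∈ indepTuples K S b, #{x ∈ S | x ∉ Submodule.span K (Set.range v)} ≤
      #(indepTuples K S (b + 1)) := by
  rw [← card_sigma]
  refine card_le_card_of_injOn (fun p => Fin.snoc p.1 p.2) (fun p hp => ?_) (fun p _ q _ h => ?_)
  · simp only [coe_sigma, Set.mem_sigma_iff, mem_coe, mem_filter, mem_indepTuples] at hp ⊢
    obtain ⟨⟨hvS, hv⟩, hxS, hx⟩ := hp
    refine ⟨Fin.lastCases (by simpa using hxS) (fun t => by simpa using hvS t), ?_⟩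
    exact linearIndependent_finSnoc.mpr ⟨hv, hx⟩
  · have hlast : p.2 = q.2 := by simpa using congrFun h (Fin.last b)
    have hinit : p.1 = q.1 := funext fun t => by simpa using congrFun h t.castSucc
    exact Sigma.ext hinit (heq_of_eq hlast)

theorem card_filter_mem_span_add_one_le [Fintype K] [Fintype ι] {S : Finset V} (hS : 0 ∉ S)
    (v : ι → V) :
    #{x ∈ S | x ∈ Submodule.span K (Set.range v)} + 1 ≤ Fintype.card K ^ Fintype.card ι := by
  have hsub : insert 0 {x ∈ S | x ∈ Submodule.span K (Set.range v)} ⊆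
      univ.image fun c : ι → K => ∑ i, c i • v i := by
    intro x hx
    simp only [mem_insert, mem_filter, Submodule.mem_span_range_iff_exists_fun] at hx
    rcases hx with rfl | ⟨-, c, hc⟩
    · exact mem_image.mpr ⟨0, mem_univ _, by simp⟩
    · exact mem_image.mpr ⟨c, mem_univ _, hc⟩
  calc #{x ∈ S | x ∈ Submodule.span K (Set.range v)} + 1
      = #(insert 0 {x ∈ S | x ∈ Submodule.span K (Set.range v)}) :=
        (card_insert_of_notMem fun h => hS (mem_filter.mp h).1).symm
    _ ≤ #(univ : Finset (ι → K)) := (card_le_card hsub).trans card_image_le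
    _ = Fintype.card K ^ Fintype.card ι := by simp

theorem prod_le_card_indepTuples [Fintype K] {S : Finset V} (hS : 0 ∉ S) {r : ℕ} (hr : r < #S)
    (b : ℕ) : ∏ j ∈ range b, (r + 2 - Fintype.card K ^ j) ≤ #(indepTuples K S b) := by
  induction b with
  | zero => simp [indepTuples]
  | succ b ih =>
    have hstep : ∀ v ∈ indepTuples K S b,
        r + 2 - Fintype.card K ^ b ≤ #{x ∈ S | x ∉ Submodule.span K (Set.range v)} := by
      intro v _
      have hspan := card_filter_mem_span_add_one_le (K := K) hS v
      have hsplit := card_filter_add_card_filter_not (s := S)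
        (p := (· ∈ Submodule.span K (Set.range v)))
      rw [Fintype.card_fin] at hspan
      omega
    calc ∏ j ∈ range (b + 1), (r + 2 - Fintype.card K ^ j)
        = (∏ j ∈ range b, (r + 2 - Fintype.card K ^ j)) * (r + 2 - Fintype.card K ^ b) :=
          prod_range_succ _ _
      _ ≤ #(indepTuples K S b) * (r + 2 - Fintype.card K ^ b) := by gcongr
      _ ≤ ∑ v ∈ indepTuples K S b, #{x ∈ S | x ∉ Submodule.span K (Set.range v)} := by
          simpa only [smul_eq_mul] using card_nsmul_le_sum _ _ _ hstep
      _ ≤ #(indepTuples K S (b + 1)) := sum_card_notMem_span_le_card_indepTuples S b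

theorem sum_card_indepTuples_filter_mul_pow [Fintype (V →ₗ[K] W)] [DecidableEq W]
    (U : Finset V) (y : W) (b : ℕ) :
    (∑ B : V →ₗ[K] W, #(indepTuples K {x ∈ U | B x = y} b)) * Nat.card W ^ b =
      #(indepTuples K U b) * Nat.card (V →ₗ[K] W) := by
  simp only [indepTuples_filter, card_filter]
  rw [sum_comm, sum_mul, card_eq_sum_ones, sum_mul]
  refine sum_congr rfl fun v hv => ?_
  have hfiber := (mem_indepTuples.mp hv).2.card_linearMap_apply_eq_mul fun _ => y
  rw [Fintype.card_fin, Nat.card_eq_fintype_card, Fintype.card_subtype] at hfiber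
  rw [one_mul, ← hfiber, card_filter]

theorem sum_card_indepTuples_filter_le [Fintype (V →ₗ[K] W)] [DecidableEq W] [Finite W]
    {U : Finset V} (hU : #U ≤ Nat.card W) (y : W) (b : ℕ) :
    ∑ B : V →ₗ[K] W, #(indepTuples K {x ∈ U | B x = y} b) ≤ Nat.card (V →ₗ[K] W) := by
  refine Nat.le_of_mul_le_mul_right (c := Nat.card W ^ b) ?_ (pow_pos Nat.card_pos b)
  rw [sum_card_indepTuples_filter_mul_pow, mul_comm]
  exact Nat.mul_le_mul_left _ ((card_indepTuples_le U b).trans (Nat.pow_le_pow_left hU b))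

end

/-- Let U = {u_1, ..., u_{2^m}} be a set of 2^m distinct nonzero vectors in F_2^n,
let B : F_2^n → F_2^m be a uniformly random linear map, fix y ∈ F_2^m, and define
Z_y = |{i : B u_i = y}|. Then for every integer r ≥ 0, with a = ⌈log_2(r+2)⌉, we have
Pr[Z_y > r] ≤ (∏_{j=0}^{a-1} (r + 2 - 2^j))^{-1}. -/
theorem stmt_1 (n m : ℕ) (u : Fin (2 ^ m) → (Fin n → ZMod 2))
    (hu_inj : Function.Injective u) (hu_ne : ∀ i, u i ≠ 0)
    (y : Fin m → ZMod 2) (r : ℕ) (a : ℕ) (ha : a = Nat.clog 2 (r + 2)) :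
    (Nat.card {B : Lin n m // r < Nat.card {i : Fin (2 ^ m) // B (u i) = y}} : ℝ) /
        (Nat.card (Lin n m) : ℝ) ≤
      ((∏ j ∈ Finset.range a, (r + 2 - 2 ^ j) : ℕ) : ℝ)⁻¹ := by
  classical
  have : Finite (Lin n m) := Module.finite_of_finite (ZMod 2)
  have : Fintype (Lin n m) := Fintype.ofFinite _
  set U := univ.image u
  set bad : Finset (Lin n m) := {B | r < Nat.card {i // B (u i) = y}}
  have hX : ∀ B ∈ bad,
      ∏ j ∈ range a, (r + 2 - 2 ^ j) ≤ #(indepTuples (ZMod 2) {x ∈ U | B x = y} a) := by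
    intro B hB
    have hcard : #{x ∈ U | B x = y} = Nat.card {i // B (u i) = y} := by
      rw [filter_image, card_image_of_injective _ hu_inj, Nat.card_eq_fintype_card,
        Fintype.card_subtype]
    simpa only [ZMod.card] using prod_le_card_indepTuples (K := ZMod 2) (by simp [U, hu_ne])
      (hcard ▸ (mem_filter.mp hB).2) a
  have hmarkov : #bad * ∏ j ∈ range a, (r + 2 - 2 ^ j) ≤ Nat.card (Lin n m) := calc
    _ ≤ ∑ B ∈ bad, #(indepTuples (ZMod 2) {x ∈ U | B x = y} a) := by
      simpa only [smul_eq_mul] using card_nsmul_le_sum _ _ _ hX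
    _ ≤ ∑ B : Lin n m, #(indepTuples (ZMod 2) {x ∈ U | B x = y} a) :=
      sum_le_sum_of_subset (subset_univ _)
    _ ≤ Nat.card (Lin n m) := sum_card_indepTuples_filter_le
      (card_image_le.trans (by simp [Nat.card_eq_fintype_card])) y a
  have hP : 0 < ∏ j ∈ range a, (r + 2 - 2 ^ j) := ha ▸ prod_range_clog_sub_pow_pos 2 (r + 2)
  rw [Nat.card_eq_fintype_card (α := {B // _}), Fintype.card_subtype,
    div_le_iff₀ (by exact_mod_cast Nat.card_pos), inv_mul_eq_div,
    le_div_iff₀ (by exact_mod_cast hP)]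
  exact_mod_cast hmarkov
end

section
/- Let γ = ∏_{j=1}^∞ (1 - 2^{-j}) and fix an integer a ≥ 1. For every integer m there exist n ≥ m and a set U ⊆ F_2^n of 2^m distinct nonzero vectors such that, writing p_m for the probability that a uniformly random linear map B : F_2^n → F_2^m satisfies |{u ∈ U : B u = 0}| > 2^a - 2, one has liminf_{m→∞} p_m ≥ γ^{-1} 2^{-a^2} (1 - 2^{-a})^2. -/
/-- γ = ∏_{j=1}^∞ (1 - 2^{-j}). -/
noncomputable def gammaProd : ℝ := ∏' j : ℕ, (1 - (2 : ℝ)⁻¹ ^ (j + 1))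

/-!
Take `n = m + 1` and let `U` consist of the vectors `(0, y)` with `y ≠ 0` together with `e₀`.
If `M y := B (0, y)`, every nonzero vector of `ker M` gives an element of `U` killed by `B`, so
the event holds as soon as `dim ker M ≥ a`, and `M` is a uniformly random `m × m` matrix.
With `r = m - a`, the matrices of rank `r` are the composites `g ∘ f` of a surjection
`f : F₂^m → F₂^r` and an injection `g : F₂^r → F₂^m`; in the fiber over `M` the pair is determined
by `g`, an injection `F₂^r → range M`, so fibers have at most `|GL_r(F₂)|` elements. Since there are
`∏_{i<r} (2^m - 2^i)` injections `F₂^r → F₂^m`, the probability is at least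
`2^{-a²} T² / T₀` with `T = ∏_{j<r} (1 - 2^{-(a+1+j)}) ≥ 1 - 2^{-a}` and
`T₀ = ∏_{j<r} (1 - 2^{-(j+1)}) ≤ γ / (1 - 2^{-r})`, which tends to the claimed bound.
-/

open Module Finset Function Filter Topology

section LinearMapCount

variable {K : Type*} [Field K]

theorem card_injective_linearMap_fin [Fintype K] {W : Type*} [AddCommGroup W] [Module K W]
    [Finite W] {r : ℕ} (h : r ≤ finrank K W) :
    Nat.card {f : (Fin r → K) →ₗ[K] W // Injective f} =
      ∏ i ∈ range r, (Fintype.card K ^ finrank K W - Fintype.card K ^ i) := by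
  have e : {v : Fin r → W // LinearIndependent K v} ≃
      {f : (Fin r → K) →ₗ[K] W // Injective f} :=
    (piEquiv (Fin r) K W).toEquiv.subtypeEquiv fun v => by
      have : piEquiv (Fin r) K W v = Fintype.linearCombination K v := by
        ext w; simp [piEquiv_apply_apply, Fintype.linearCombination_apply]
      simp [this, linearIndependent_iff_injective_fintypeLinearCombination]
  rw [← Nat.card_congr e, card_linearIndependent h, Fin.prod_univ_eq_prod_range
    (fun i => Fintype.card K ^ finrank K W - Fintype.card K ^ i)]

theorem Matrix.surjective_toLin'_iff {n : Type*} [Fintype n] [DecidableEq n] {r : ℕ}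
    (A : Matrix (Fin r) n K) : Surjective (Matrix.toLin' A) ↔ A.rank = r := by
  rw [Matrix.rank, ← Matrix.toLin'_apply', ← LinearMap.range_eq_top]
  exact ⟨fun h => by rw [h, finrank_top, finrank_fin_fun],
    fun h => Submodule.eq_top_of_finrank_eq (by simpa using h)⟩

theorem Matrix.injective_toLin'_iff {m : Type*} [Fintype m] {r : ℕ}
    (A : Matrix m (Fin r) K) : Injective (Matrix.toLin' A) ↔ A.rank = r := by
  rw [Matrix.rank, ← Matrix.toLin'_apply', ← LinearMap.ker_eq_bot,
    ← Submodule.finrank_eq_zero (R := K)]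
  have := LinearMap.finrank_range_add_finrank_ker (Matrix.toLin' A)
  simp only [finrank_fin_fun] at this
  omega

theorem card_surjective_linearMap_fin (m r : ℕ) :
    Nat.card {f : (Fin m → K) →ₗ[K] (Fin r → K) // Surjective f} =
      Nat.card {g : (Fin r → K) →ₗ[K] (Fin m → K) // Injective g} := by
  refine Nat.card_congr <| Equiv.subtypeEquiv
    (LinearMap.toMatrix'.toEquiv.trans <| (Matrix.transposeLinearEquiv _ _ K K).toEquiv.trans
      Matrix.toLin'.toEquiv) fun f => ?_
  conv_lhs => rw [← Matrix.toLin'_toMatrix' f]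
  rw [Matrix.surjective_toLin'_iff]
  simp [Matrix.injective_toLin'_iff, Matrix.rank_transpose]

theorem Nat.card_le_mul_card_of_card_fiber_le {α β : Type*} [Finite β] (f : α → β) {k : ℕ}
    (h : ∀ b, Nat.card {x // f x = b} ≤ k) : Nat.card α ≤ k * Nat.card β := by
  rcases finite_or_infinite α with hα | hα
  · have := Fintype.ofFinite β
    calc Nat.card α = ∑ b, Nat.card {x // f x = b} := by
          rw [← Nat.card_sigma, Nat.card_congr (Equiv.sigmaFiberEquiv f)]
      _ ≤ ∑ _b : β, k := sum_le_sum fun b _ => h b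
      _ = k * Nat.card β := by simp [mul_comm]
  · simp

theorem card_surjective_mul_card_injective_le [Fintype K] {V W : Type*} [AddCommGroup V]
    [Module K V] [Finite V] [AddCommGroup W] [Module K W] [Finite W] (r : ℕ) :
    Nat.card {f : V →ₗ[K] (Fin r → K) // Surjective f} *
        Nat.card {g : (Fin r → K) →ₗ[K] W // Injective g} ≤
      Nat.card {σ : (Fin r → K) →ₗ[K] (Fin r → K) // Injective σ} *
        Nat.card {M : V →ₗ[K] W // finrank K (LinearMap.range M) = r} := by
  have : Finite (V →ₗ[K] W) := Module.finite_of_finite K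
  let compose (p : {f : V →ₗ[K] (Fin r → K) // Surjective f} ×
      {g : (Fin r → K) →ₗ[K] W // Injective g}) :
      {M : V →ₗ[K] W // finrank K (LinearMap.range M) = r} :=
    ⟨p.2.1 ∘ₗ p.1.1, by
      rw [LinearMap.range_comp_of_range_eq_top _ (LinearMap.range_eq_top.2 p.1.2),
        LinearMap.finrank_range_of_inj p.2.2, finrank_fin_fun]⟩
  rw [← Nat.card_prod]
  refine Nat.card_le_mul_card_of_card_fiber_le compose fun M => ?_
  have hrange (p) (hp : compose p = M) : LinearMap.range p.2.1 = LinearMap.range M.1 := by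
    rw [← hp]
    exact (LinearMap.range_comp_of_range_eq_top _ (LinearMap.range_eq_top.2 p.1.2)).symm
  let restrict (p : {p // compose p = M}) :
      {g : (Fin r → K) →ₗ[K] LinearMap.range M.1 // Injective g} :=
    ⟨LinearMap.codRestrict _ p.1.2.1 fun x => hrange p.1 p.2 ▸ LinearMap.mem_range_self _ x,
      fun x y hxy => p.1.2.2 (congrArg Subtype.val hxy)⟩
  calc Nat.card {p // compose p = M}
      ≤ Nat.card {g : (Fin r → K) →ₗ[K] LinearMap.range M.1 // Injective g} := by
        have : Finite ((Fin r → K) →ₗ[K] LinearMap.range M.1) := Module.finite_of_finite K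
        refine Nat.card_le_card_of_injective restrict fun p p' hpp' => ?_
        have hg : p.1.2.1 = p'.1.2.1 :=
          LinearMap.ext fun x => congrArg (fun g => (g.1 x : W)) hpp'
        have hM : p.1.2.1 ∘ₗ p.1.1.1 = p'.1.2.1 ∘ₗ p'.1.1.1 :=
          congrArg Subtype.val (p.2.trans p'.2.symm)
        have hf : p.1.1.1 = p'.1.1.1 := by
          ext1 x
          exact p.1.2.2 (by simpa [hg] using LinearMap.congr_fun hM x)
        exact Subtype.ext (Prod.ext (Subtype.ext hf) (Subtype.ext hg))
    _ = Nat.card {σ : (Fin r → K) →ₗ[K] (Fin r → K) // Injective σ} := by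
        rw [card_injective_linearMap_fin M.2.ge, card_injective_linearMap_fin (by simp), M.2,
          finrank_fin_fun]

end LinearMapCount

section TestSet

variable {K : Type*} [Field K]

variable (K) in
def consZero (m : ℕ) : (Fin m → K) →ₗ[K] (Fin (m + 1) → K) :=
  (Fin.consLinearEquiv K fun _ => K).toLinearMap ∘ₗ LinearMap.inr K K (Fin m → K)

@[simp]
theorem consZero_apply {m : ℕ} (y : Fin m → K) : consZero K m y = Fin.cons 0 y := rfl

theorem consZero_injective (m : ℕ) : Injective (consZero K m) :=
  fun _ _ h => by simpa using h

theorem consZero_ne_single_zero_one {m : ℕ} (y : Fin m → K) :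
    consZero K m y ≠ Pi.single 0 1 := by
  intro h
  simpa using congrFun h 0

theorem card_linearMap_consZero_comp {Z : Type*} [AddCommGroup Z] [Module K Z] {m : ℕ}
    (P : ((Fin m → K) →ₗ[K] Z) → Prop) :
    Nat.card {B : (Fin (m + 1) → K) →ₗ[K] Z // P (B ∘ₗ consZero K m)} =
      Nat.card {M // P M} * Nat.card Z := by
  let e := Fin.consLinearEquiv K fun _ : Fin (m + 1) => K
  let split : ((Fin (m + 1) → K) →ₗ[K] Z) ≃ ((K →ₗ[K] Z) × ((Fin m → K) →ₗ[K] Z)) :=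
    ((e.arrowCongr (LinearEquiv.refl K Z)).symm.trans (LinearMap.coprodEquiv K).symm).toEquiv
  calc Nat.card {B : (Fin (m + 1) → K) →ₗ[K] Z // P (B ∘ₗ consZero K m)}
      = Nat.card {p : (K →ₗ[K] Z) × ((Fin m → K) →ₗ[K] Z) // P p.2} :=
        Nat.card_congr (split.subtypeEquiv fun B => Iff.rfl)
    _ = Nat.card ({M // P M} × (K →ₗ[K] Z)) :=
        Nat.card_congr <| ((Equiv.prodComm _ _).subtypeEquiv fun _ => Iff.rfl).trans
          Equiv.prodSubtypeFstEquivSubtypeProd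
    _ = Nat.card {M // P M} * Nat.card Z := by
        rw [Nat.card_prod, Nat.card_congr (LinearMap.ringLmapEquivSelf K K Z).toEquiv]

variable [Fintype K] [DecidableEq K]

variable (K) in
def testSet (m : ℕ) : Finset (Fin (m + 1) → K) :=
  insert (Pi.single 0 1) (((univ : Finset (Fin m → K)).erase 0).image (consZero K m))

theorem card_testSet (m : ℕ) : (testSet K m).card = Fintype.card K ^ m := by
  rw [testSet, card_insert_of_notMem fun h => by
      obtain ⟨y, -, hy⟩ := mem_image.1 h
      exact consZero_ne_single_zero_one y hy,
    card_image_of_injective _ (consZero_injective m), card_erase_of_mem (mem_univ _),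
    card_univ, Fintype.card_fun, Fintype.card_fin,
    Nat.sub_add_cancel (Nat.one_le_pow _ _ Fintype.card_pos)]

theorem zero_notMem_testSet (m : ℕ) : (0 : Fin (m + 1) → K) ∉ testSet K m := by
  simp only [testSet, mem_insert, mem_image, mem_erase, mem_univ, and_true, not_or, not_exists,
    not_and]
  exact ⟨fun h => by simpa using congrFun h 0,
    fun y hy h => hy ((consZero_injective m).eq_iff' (map_zero _) |>.1 h)⟩

theorem card_ker_sub_one_le_card_filter_testSet {m : ℕ} {Y : Type*} [AddCommGroup Y]
    [Module K Y] [DecidableEq Y] (B : (Fin (m + 1) → K) →ₗ[K] Y) :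
    Nat.card (LinearMap.ker (B ∘ₗ consZero K m)) - 1 ≤ ((testSet K m).filter (B · = 0)).card := by
  calc Nat.card (LinearMap.ker (B ∘ₗ consZero K m)) - 1
      = ((univ.filter (fun y => B (consZero K m y) = 0)).erase 0).card := by
        rw [card_erase_of_mem (mem_filter.2 ⟨mem_univ _, by rw [map_zero, map_zero]⟩),
          ← Fintype.card_subtype, ← Nat.card_eq_fintype_card]
        rfl
    _ = (((univ.filter (fun y => B (consZero K m y) = 0)).erase 0).image (consZero K m)).card :=
        (card_image_of_injective _ (consZero_injective m)).symm
    _ ≤ ((testSet K m).filter (B · = 0)).card := by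
        refine card_le_card fun x hx => ?_
        simp only [mem_image, mem_erase, mem_filter, mem_univ, true_and] at hx
        obtain ⟨y, ⟨hy0, hy⟩, rfl⟩ := hx
        exact mem_filter.2 ⟨mem_insert_of_mem (mem_image_of_mem _ (by simpa using hy0)), hy⟩

end TestSet

section TailProducts

noncomputable def tailProd (s r : ℕ) : ℝ := ∏ j ∈ range r, (1 - (2 : ℝ)⁻¹ ^ (s + 1 + j))

theorem tailProd_pos (s r : ℕ) : 0 < tailProd s r :=
  prod_pos fun _ _ => sub_pos.2 (pow_lt_one₀ (by norm_num) (by norm_num) (by omega))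

-- The extra term `2⁻¹ ^ (s + r)` is what survives the induction step.
theorem one_sub_inv_two_pow_add_le_tailProd (s r : ℕ) :
    1 - (2 : ℝ)⁻¹ ^ s + (2 : ℝ)⁻¹ ^ (s + r) ≤ tailProd s r := by
  induction r with
  | zero => simp [tailProd]
  | succ r ih =>
    have hx : (2 : ℝ)⁻¹ ^ (s + r) = 2 * (2 : ℝ)⁻¹ ^ (s + 1 + r) := by
      rw [show s + 1 + r = s + r + 1 by omega, pow_succ]; ring
    have hle : (2 : ℝ)⁻¹ ^ (s + r) ≤ (2 : ℝ)⁻¹ ^ s :=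
      pow_le_pow_of_le_one (by norm_num) (by norm_num) (by omega)
    have hx1 : (2 : ℝ)⁻¹ ^ (s + 1 + r) ≤ 1 := pow_le_one₀ (by norm_num) (by norm_num)
    rw [tailProd, prod_range_succ, ← tailProd, show s + (r + 1) = s + 1 + r by omega]
    nlinarith [pow_nonneg (show (0 : ℝ) ≤ 2⁻¹ by norm_num) (s + 1 + r)]

theorem one_sub_inv_two_pow_le_tailProd (s r : ℕ) : 1 - (2 : ℝ)⁻¹ ^ s ≤ tailProd s r :=
  le_trans (le_add_of_nonneg_right (by positivity)) (one_sub_inv_two_pow_add_le_tailProd s r)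

theorem multipliable_one_sub_inv_two_pow :
    Multipliable fun j : ℕ => 1 - (2 : ℝ)⁻¹ ^ (j + 1) := by
  have hsum : Summable fun j : ℕ => -(2 : ℝ)⁻¹ ^ (j + 1) :=
    ((summable_nat_add_iff 1).2 (summable_geometric_of_lt_one (by norm_num) (by norm_num))).neg
  simpa [sub_eq_add_neg] using Real.multipliable_one_add_of_summable hsum

theorem tailProd_zero_mul_le_gammaProd (r : ℕ) :
    tailProd 0 r * (1 - (2 : ℝ)⁻¹ ^ r) ≤ gammaProd := by
  refine ge_of_tendsto multipliable_one_sub_inv_two_pow.hasProd.tendsto_prod_nat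
    (eventually_atTop.2 ⟨r, fun n hn => ?_⟩)
  obtain ⟨k, rfl⟩ := Nat.exists_eq_add_of_le hn
  have hsplit : ∏ j ∈ range (r + k), (1 - (2 : ℝ)⁻¹ ^ (j + 1)) =
      tailProd 0 r * tailProd r k := by
    simp only [tailProd, prod_range_add, zero_add, add_right_comm r 1, add_comm 1]
  rw [hsplit]
  exact mul_le_mul_of_nonneg_left (one_sub_inv_two_pow_le_tailProd r k) (tailProd_pos 0 r).le

theorem prod_two_pow_sub_two_pow (s r : ℕ) :
    ∏ i ∈ range r, ((2 : ℝ) ^ (s + r) - 2 ^ i) = 2 ^ (r * (s + r)) * tailProd s r := by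
  have hconst := pow_card_mul_prod (s := range r) (b := (2 : ℝ) ^ (s + r))
    (f := fun j => 1 - (2 : ℝ)⁻¹ ^ (s + 1 + j))
  rw [card_range] at hconst
  rw [← prod_range_reflect, tailProd, pow_mul', hconst]
  refine prod_congr rfl fun j hj => ?_
  have hj : j < r := mem_range.1 hj
  rw [mul_sub, mul_one, show s + r = (s + 1 + j) + (r - 1 - j) by omega, pow_add, inv_pow,
    mul_right_comm, mul_inv_cancel₀ (by positivity), one_mul]

end TailProducts

section Density

def KernelEvent (a m : ℕ) (B : Lin (m + 1) m) : Prop :=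
  2 ^ a - 2 < ((testSet (ZMod 2) m).filter (B · = 0)).card

theorem card_lin (n m : ℕ) : Nat.card (Lin n m) = 2 ^ (n * m) := by
  have : Finite (Lin n m) := Module.finite_of_finite (ZMod 2)
  have := Fintype.ofFinite (Lin n m)
  rw [Nat.card_eq_fintype_card, Module.card_eq_pow_finrank (K := ZMod 2),
    Module.finrank_linearMap]
  simp

theorem cast_card_injective_lin (s r : ℕ) :
    (Nat.card {f : Lin r (s + r) // Injective f} : ℝ) = 2 ^ (r * (s + r)) * tailProd s r := by
  rw [card_injective_linearMap_fin (by simp), ← prod_two_pow_sub_two_pow]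
  push_cast [ZMod.card, finrank_fin_fun]
  refine prod_congr rfl fun i hi => ?_
  rw [Nat.cast_sub (Nat.pow_le_pow_right two_pos (by simp at hi; omega))]
  push_cast
  rfl

theorem kernelEvent_of_le_finrank_ker {a m : ℕ} (ha : 1 ≤ a) (B : Lin (m + 1) m)
    (hB : a ≤ finrank (ZMod 2) (LinearMap.ker (B ∘ₗ consZero (ZMod 2) m))) :
    KernelEvent a m B := by
  have hker : 2 ^ a ≤ Nat.card (LinearMap.ker (B ∘ₗ consZero (ZMod 2) m)) := by
    have := Fintype.ofFinite (LinearMap.ker (B ∘ₗ consZero (ZMod 2) m))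
    rw [Nat.card_eq_fintype_card, Module.card_eq_pow_finrank (K := ZMod 2), ZMod.card]
    exact Nat.pow_le_pow_right two_pos hB
  have h2 : 2 ≤ 2 ^ a := Nat.le_self_pow (by omega) 2
  have := card_ker_sub_one_le_card_filter_testSet B
  unfold KernelEvent
  omega

theorem card_finrank_range_eq_mul_le_card_kernelEvent (a r : ℕ) (ha : 1 ≤ a) :
    Nat.card {M : Lin (a + r) (a + r) // finrank (ZMod 2) (LinearMap.range M) = r} * 2 ^ (a + r) ≤
      Nat.card {B // KernelEvent a (a + r) B} := by
  have : Finite (Lin (a + r + 1) (a + r)) := Module.finite_of_finite (ZMod 2)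
  have hcard := card_linearMap_consZero_comp (K := ZMod 2) (Z := Fin (a + r) → ZMod 2) (m := a + r)
    fun M => finrank (ZMod 2) (LinearMap.range M) = r
  rw [Nat.card_eq_fintype_card (α := Fin (a + r) → ZMod 2), Fintype.card_fun, ZMod.card,
    Fintype.card_fin] at hcard
  rw [← hcard]
  refine Nat.card_mono (Set.toFinite _) fun B hB => kernelEvent_of_le_finrank_ker ha B ?_
  have hrank : finrank (ZMod 2) (LinearMap.range (B ∘ₗ consZero (ZMod 2) (a + r))) = r := hB
  have := LinearMap.finrank_range_add_finrank_ker (B ∘ₗ consZero (ZMod 2) (a + r))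
  rw [finrank_fin_fun, hrank] at this
  omega

theorem card_injective_sq_mul_le_card_kernelEvent (a r : ℕ) (ha : 1 ≤ a) :
    Nat.card {f : Lin r (a + r) // Injective f} ^ 2 * 2 ^ (a + r) ≤
      Nat.card {σ : Lin r r // Injective σ} * Nat.card {B // KernelEvent a (a + r) B} :=
  calc Nat.card {f : Lin r (a + r) // Injective f} ^ 2 * 2 ^ (a + r)
      = Nat.card {f : Lin (a + r) r // Surjective f} *
          Nat.card {f : Lin r (a + r) // Injective f} * 2 ^ (a + r) := by
        rw [card_surjective_linearMap_fin, sq]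
    _ ≤ Nat.card {σ : Lin r r // Injective σ} *
          Nat.card {M : Lin (a + r) (a + r) // finrank (ZMod 2) (LinearMap.range M) = r} *
            2 ^ (a + r) :=
        Nat.mul_le_mul_right _ (card_surjective_mul_card_injective_le r)
    _ ≤ _ := by
        rw [mul_assoc]
        exact Nat.mul_le_mul_left _ (card_finrank_range_eq_mul_le_card_kernelEvent a r ha)

theorem le_div_of_tailProd_sq_mul_le {a r : ℕ} {N : ℝ}
    (h : (2 ^ (r * (a + r)) * tailProd a r) ^ 2 * 2 ^ (a + r) ≤ 2 ^ (r * r) * tailProd 0 r * N) :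
    gammaProd⁻¹ * ((2 : ℝ) ^ (a ^ 2))⁻¹ * (1 - (2 : ℝ)⁻¹ ^ a) ^ 2 * (1 - (2 : ℝ)⁻¹ ^ r) ≤
      N / 2 ^ ((a + r + 1) * (a + r)) := by
  have hr : 0 ≤ 1 - (2 : ℝ)⁻¹ ^ r := sub_nonneg.2 (pow_le_one₀ (by norm_num) (by norm_num))
  have hγ : gammaProd⁻¹ * (tailProd 0 r * (1 - (2 : ℝ)⁻¹ ^ r)) ≤ 1 :=
    inv_mul_le_one_of_le₀ (tailProd_zero_mul_le_gammaProd r)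
      ((mul_nonneg (tailProd_pos 0 r).le hr).trans (tailProd_zero_mul_le_gammaProd r))
  have hT : (1 - (2 : ℝ)⁻¹ ^ a) ^ 2 ≤ tailProd a r ^ 2 :=
    pow_le_pow_left₀ (sub_nonneg.2 (pow_le_one₀ (by norm_num) (by norm_num)))
      (one_sub_inv_two_pow_le_tailProd a r) 2
  have hpow : (2 : ℝ) ^ ((a + r + 1) * (a + r)) * 2 ^ (r * r) =
      2 ^ (a ^ 2) * ((2 ^ (r * (a + r))) ^ 2 * 2 ^ (a + r)) := by
    rw [← pow_mul, ← pow_add, ← pow_add, ← pow_add]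
    congr 1
    ring
  have hpos : (0 : ℝ) < 2 ^ (r * r) * tailProd 0 r := mul_pos (by positivity) (tailProd_pos 0 r)
  rw [le_div_iff₀ (by positivity)]
  refine le_of_mul_le_mul_right ?_ hpos
  calc _ = gammaProd⁻¹ * (tailProd 0 r * (1 - (2 : ℝ)⁻¹ ^ r)) * (1 - (2 : ℝ)⁻¹ ^ a) ^ 2 *
        (((2 : ℝ) ^ (a ^ 2))⁻¹ * (2 ^ ((a + r + 1) * (a + r)) * 2 ^ (r * r))) := by ring
    _ = gammaProd⁻¹ * (tailProd 0 r * (1 - (2 : ℝ)⁻¹ ^ r)) * (1 - (2 : ℝ)⁻¹ ^ a) ^ 2 *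
        ((2 ^ (r * (a + r))) ^ 2 * 2 ^ (a + r)) := by
      rw [hpow, inv_mul_cancel_left₀ (by positivity)]
    _ ≤ 1 * tailProd a r ^ 2 * ((2 ^ (r * (a + r))) ^ 2 * 2 ^ (a + r)) :=
      mul_le_mul_of_nonneg_right (mul_le_mul hγ hT (sq_nonneg _) zero_le_one) (by positivity)
    _ = (2 ^ (r * (a + r)) * tailProd a r) ^ 2 * 2 ^ (a + r) := by ring
    _ ≤ 2 ^ (r * r) * tailProd 0 r * N := h
    _ = N * (2 ^ (r * r) * tailProd 0 r) := by ring

theorem mul_one_sub_inv_two_pow_le_density (a r : ℕ) (ha : 1 ≤ a) :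
    gammaProd⁻¹ * ((2 : ℝ) ^ (a ^ 2))⁻¹ * (1 - (2 : ℝ)⁻¹ ^ a) ^ 2 * (1 - (2 : ℝ)⁻¹ ^ r) ≤
      (Nat.card {B // KernelEvent a (a + r) B} : ℝ) / Nat.card (Lin (a + r + 1) (a + r)) := by
  rw [card_lin, Nat.cast_pow, Nat.cast_ofNat]
  refine le_div_of_tailProd_sq_mul_le ?_
  have hsq := cast_card_injective_lin 0 r
  rw [zero_add] at hsq
  rw [← cast_card_injective_lin, ← hsq]
  exact_mod_cast card_injective_sq_mul_le_card_kernelEvent a r ha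

end Density

/-- Let γ = ∏_{j=1}^∞ (1 - 2^{-j}) and fix an integer a ≥ 1. For every integer m
there exist n ≥ m and a set U ⊆ F_2^n of 2^m distinct nonzero vectors such that, writing p_m for
the probability that a uniformly random linear map B : F_2^n → F_2^m satisfies
|{u ∈ U : B u = 0}| > 2^a - 2, one has liminf_{m→∞} p_m ≥ γ^{-1} 2^{-a^2} (1 - 2^{-a})^2. -/
theorem stmt_3 (a : ℕ) (ha : 1 ≤ a) :
    ∃ (n : ℕ → ℕ) (U : (m : ℕ) → Finset (Fin (n m) → ZMod 2)),
      (∀ m, m ≤ n m) ∧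
      (∀ m, (U m).card = 2 ^ m) ∧
      (∀ m, (0 : Fin (n m) → ZMod 2) ∉ U m) ∧
      gammaProd⁻¹ * ((2 : ℝ) ^ (a ^ 2))⁻¹ * (1 - (2 : ℝ)⁻¹ ^ a) ^ 2 ≤
        Filter.liminf (fun m : ℕ =>
          (Nat.card {B : Lin (n m) m //
              2 ^ a - 2 < ((U m).filter (fun x => B x = 0)).card} : ℝ) /
            (Nat.card (Lin (n m) m) : ℝ)) Filter.atTop := by
  refine ⟨fun m => m + 1, testSet (ZMod 2), fun m => m.le_succ,
    fun m => (card_testSet m).trans (by rw [ZMod.card]), zero_notMem_testSet, ?_⟩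
  set C := gammaProd⁻¹ * ((2 : ℝ) ^ (a ^ 2))⁻¹ * (1 - (2 : ℝ)⁻¹ ^ a) ^ 2
  have hlim : Tendsto (fun m : ℕ => C * (1 - (2 : ℝ)⁻¹ ^ (m - a))) atTop (𝓝 C) := by
    have h0 : Tendsto (fun m : ℕ => (2 : ℝ)⁻¹ ^ (m - a)) atTop (𝓝 0) :=
      (tendsto_pow_atTop_nhds_zero_of_lt_one (by norm_num) (by norm_num)).comp
        (tendsto_sub_atTop_nat a)
    simpa only [sub_zero, mul_one] using (h0.const_sub 1).const_mul C
  rw [← hlim.liminf_eq]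
  refine liminf_le_liminf (eventually_atTop.2 ⟨a, fun m hm => ?_⟩) hlim.isBoundedUnder_ge
    (isBoundedUnder_of ⟨1, fun m => ?_⟩).isCoboundedUnder_ge
  · obtain ⟨r, rfl⟩ := Nat.exists_eq_add_of_le hm
    rw [Nat.add_sub_cancel_left]
    exact mul_one_sub_inv_two_pow_le_density a r ha
  · have : Finite (Lin (m + 1) m) := Module.finite_of_finite (ZMod 2)
    exact div_le_one_of_le₀ (Nat.cast_le.2 (Finite.card_subtype_le _)) (Nat.cast_nonneg _)
end

section
/- Let G be a finite additive abelian group, let w ∈ G, let b > 1 be a real number, and let f : G → ℕ. Then (1/|G|) ∑_{C ∈ G} b^{f(C) + f(C + w)} − 1 ≥ 2 · ((1/|G|) ∑_{C ∈ G} b^{f(C)} − 1). -/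
/-- Let G be a finite additive abelian group, let w ∈ G, let b > 1 be a real number,
and let f : G → ℕ. Then
(1/|G|) ∑_{C ∈ G} b^{f(C) + f(C + w)} − 1 ≥ 2 · ((1/|G|) ∑_{C ∈ G} b^{f(C)} − 1). -/
theorem stmt_7 (G : Type*) [AddCommGroup G] [Fintype G] (w : G) (b : ℝ) (hb : 1 < b)
    (f : G → ℕ) :
    2 * ((1 / (Fintype.card G : ℝ)) * (∑ C : G, b ^ (f C)) - 1) ≤
      (1 / (Fintype.card G : ℝ)) * (∑ C : G, b ^ (f C + f (C + w))) - 1 := by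
  have hb0 : (0:ℝ) < b := lt_trans one_pos hb
  have hcard : (0:ℝ) < (Fintype.card G : ℝ) := by
    exact_mod_cast Fintype.card_pos
  have key : ∀ C : G, b ^ (f C) + b ^ (f (C + w)) - 1 ≤ b ^ (f C + f (C + w)) := by
    intro C
    have h1 : (1:ℝ) ≤ b ^ (f C) := one_le_pow₀ hb.le
    have h2 : (1:ℝ) ≤ b ^ (f (C + w)) := one_le_pow₀ hb.le
    have := mul_nonneg (sub_nonneg.2 h1) (sub_nonneg.2 h2)
    rw [pow_add]
    nlinarith
  have hshift : ∑ C : G, b ^ (f (C + w)) = ∑ C : G, b ^ (f C) :=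
    Fintype.sum_equiv (Equiv.addRight w) _ _ (fun C => rfl)
  have hsum : 2 * (∑ C : G, b ^ (f C)) - (Fintype.card G : ℝ)
      ≤ ∑ C : G, b ^ (f C + f (C + w)) := by
    have := Finset.sum_le_sum (fun C (_ : C ∈ Finset.univ) => key C)
    simp only [Finset.sum_sub_distrib, Finset.sum_add_distrib, Finset.sum_const,
      Finset.card_univ, nsmul_eq_mul, mul_one] at this
    linarith [this, hshift]
  rw [one_div, inv_mul_eq_div, inv_mul_eq_div]
  have h2 : (2 * (∑ C : G, b ^ (f C)) - (Fintype.card G : ℝ)) / (Fintype.card G : ℝ)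
      ≤ (∑ C : G, b ^ (f C + f (C + w))) / (Fintype.card G : ℝ) := by gcongr
  rw [sub_div, mul_div_assoc, div_self hcard.ne'] at h2
  linarith
end

section
/- Let s > 0 and 0 ≤ r ≤ 1/4 be real numbers, set d = s(2 + s), and define F(u) = min{1, 48 u^2} for u ≥ 0. Let Z be a nonnegative real random variable satisfying Z ≥ 2rs almost surely and E[Z] ≤ 2rs + r^2 s^2. Then E[F(Z/d)] ≤ 48 r^2. -/
open MeasureTheory

set_option maxHeartbeats 1000000 in
/-- Let s > 0 and 0 ≤ r ≤ 1/4 be real numbers, set d = s(2 + s), and define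
F(u) = min{1, 48 u^2}. Let Z be a nonnegative real random variable satisfying Z ≥ 2rs almost
surely and E[Z] ≤ 2rs + r^2 s^2. Then E[F(Z/d)] ≤ 48 r^2. -/
theorem stmt_9 {Ω : Type*} [MeasurableSpace Ω] (μ : Measure Ω) [IsProbabilityMeasure μ]
    (s r : ℝ) (hs : 0 < s) (hr0 : 0 ≤ r) (hr : r ≤ 1 / 4)
    (d : ℝ) (hd : d = s * (2 + s))
    (Z : Ω → ℝ) (hZmeas : Measurable Z) (hZint : Integrable Z μ)
    (hZlb : ∀ᵐ ω ∂μ, 2 * r * s ≤ Z ω)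
    (hEZ : ∫ ω, Z ω ∂μ ≤ 2 * r * s + r ^ 2 * s ^ 2) :
    ∫ ω, min 1 (48 * (Z ω / d) ^ 2) ∂μ ≤ 48 * r ^ 2 := by
  have hd0 : 0 < d := by rw [hd]; positivity
  obtain ⟨q, hqdef⟩ : ∃ q : ℝ, q = Real.sqrt 48 := ⟨_, rfl⟩
  have hq2 : q ^ 2 = 48 := by rw [hqdef]; exact Real.sq_sqrt (by norm_num)
  have hq0 : 0 ≤ q := hqdef ▸ Real.sqrt_nonneg _
  have hq7 : q ≤ 7 := by nlinarith
  obtain ⟨u0, hu0def⟩ : ∃ u0 : ℝ, u0 = 2 * r * s / d := ⟨_, rfl⟩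
  have hu00 : 0 ≤ u0 := by rw [hu0def]; positivity
  obtain ⟨c, hcdef⟩ : ∃ c : ℝ, c = q + 48 * u0 := ⟨_, rfl⟩
  have hc0 : 0 ≤ c := by rw [hcdef]; positivity
  -- pointwise bound
  have hpt : ∀ u : ℝ, u0 ≤ u → min 1 (48 * u ^ 2) ≤ 48 * u0 ^ 2 + c * (u - u0) := by
    intro u hu
    have hu0u : 0 ≤ u := le_trans hu00 hu
    rcases le_or_gt (48 * u ^ 2) 1 with h | h
    · have hqu : q * u ≤ 1 := by nlinarith [mul_nonneg hq0 hu0u]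
      have h48 : 48 * u ≤ q := by nlinarith [mul_le_mul_of_nonneg_left hqu hq0]
      have hm : min 1 (48 * u ^ 2) ≤ 48 * u ^ 2 := min_le_right _ _
      rw [hcdef]
      nlinarith [mul_nonneg (sub_nonneg.2 hu) (sub_nonneg.2 h48)]
    · have hqu : 1 ≤ q * u := by nlinarith [mul_nonneg hq0 hu0u]
      have h48 : q ≤ 48 * u := by nlinarith [mul_le_mul_of_nonneg_left hqu hq0]
      have hm : min 1 (48 * u ^ 2) ≤ 1 := min_le_left _ _
      rw [hcdef]
      nlinarith [mul_nonneg hu00 (sub_nonneg.2 h48)]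
  -- a.e. bound
  have hbd : ∀ᵐ ω ∂μ, min 1 (48 * (Z ω / d) ^ 2) ≤ 48 * u0 ^ 2 + c * (Z ω / d - u0) := by
    filter_upwards [hZlb] with ω hω
    refine hpt _ ?_
    rw [hu0def]
    gcongr
  -- integrability
  have hsub : Integrable (fun ω => Z ω / d - u0) μ := by
    exact (hZint.div_const d).sub (integrable_const _)
  have hg : Integrable (fun ω => 48 * u0 ^ 2 + c * (Z ω / d - u0)) μ := by
    exact (integrable_const _).add (hsub.const_mul c)
  have hf : Integrable (fun ω => min 1 (48 * (Z ω / d) ^ 2)) μ := by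
    refine (integrable_const (1 : ℝ)).mono' ?_ ?_
    · exact (measurable_const.min (((hZmeas.div_const d).pow_const 2).const_mul 48)).aestronglyMeasurable
    · filter_upwards with ω
      rw [Real.norm_eq_abs, abs_le]
      constructor
      · have : (0:ℝ) ≤ min 1 (48 * (Z ω / d) ^ 2) := le_min (by norm_num) (by positivity)
        linarith
      · exact min_le_left _ _
  have hint := integral_mono_ae hf hg hbd
  have heq : ∫ ω, (48 * u0 ^ 2 + c * (Z ω / d - u0)) ∂μ
      = 48 * u0 ^ 2 + c * ((∫ ω, Z ω ∂μ) / d - u0) := by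
    rw [integral_add (integrable_const _) (hsub.const_mul c), integral_const,
      integral_const_mul, integral_sub (hZint.div_const d) (integrable_const _),
      integral_div, integral_const]
    simp
  rw [heq] at hint
  have hstep : c * ((∫ ω, Z ω ∂μ) / d - u0) ≤ c * (r ^ 2 * s ^ 2 / d) := by
    apply mul_le_mul_of_nonneg_left _ hc0
    rw [hu0def, div_sub_div_same]
    gcongr
    linarith
  have h2s : (0:ℝ) < 2 + s := by linarith
  have hds : (0:ℝ) < s * (2 + s) := by positivity
  have hfinal : 48 * u0 ^ 2 + c * (r ^ 2 * s ^ 2 / d) ≤ 48 * r ^ 2 := by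
    rw [hcdef, hu0def, hd]
    have expand : 48 * (2 * r * s / (s * (2 + s))) ^ 2
        + (q + 48 * (2 * r * s / (s * (2 + s)))) * (r ^ 2 * s ^ 2 / (s * (2 + s)))
        = (192 * r ^ 2 + q * r ^ 2 * s * (2 + s) + 96 * r ^ 3 * s) / (2 + s) ^ 2 := by
      field_simp
      ring
    rw [expand, div_le_iff₀ (by positivity)]
    nlinarith [mul_nonneg (mul_nonneg (sub_nonneg.2 hq7) (sq_nonneg r)) (mul_nonneg hs.le h2s.le),
      mul_nonneg (mul_nonneg (sub_nonneg.2 hr) (sq_nonneg r)) hs.le,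
      mul_nonneg (sq_nonneg r) hs.le, mul_nonneg (sq_nonneg r) (mul_nonneg hs.le hs.le)]
  linarith
end
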